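/- arXiv:1408.3961 — 5 statements merged into one kernel-verified Lean document; each statement's English description precedes it below -/
import Mathlib

section
/- Let q be a real-valued random variable on a probability space (Ω, P) whose law is symmetric about zero (q and −q are identically distributed), with E[log(1 + q²)] < ∞ and P(q ≠ 0) > 0. Then for every E ∈ ℝ there exists ζ ∈ ℂ with Im ζ > 0 and |ζ| > 1 such that Re(ζ + 1/ζ) + E = 0 and E[ log( q² / (Im ζ)² + 1/|ζ|⁴ ) ] = 0. -/
/-!
Parametrise the solutions of `Re (ζ + 1/ζ) = -E` in the upper half-plane by `t = |ζ|`. Along this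
curve the expectation equals `Φ (t⁴ / (Im ζ)²) - 4 log t`, where `Φ c = E[log (1 + c q²)]`.
Since `Φ c ≤ log c + E[log (1 + q²)]` for `c ≥ 1` and `(Im ζ)² ≥ t² - E²`, it is negative for
large `t`. It is positive at `t = 1` when `|E| < 2`, and near the point `t₀ ≥ 1` where the curve
meets the real axis when `|E| ≥ 2`, because `Φ c → ∞` as soon as `q ≠ 0` with positive
probability. The intermediate value theorem gives the root.
-/

open MeasureTheory Complex Filter Topology Set

noncomputable def logMoment {Ω : Type*} [MeasurableSpace Ω] (P : Measure Ω) (q : Ω → ℝ) (c : ℝ) :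
    ℝ :=
  ∫ ω, Real.log (1 + c * q ω ^ 2) ∂P

lemma Real.log_one_add_mul_le {c x : ℝ} (hc : 0 ≤ c) (hx : 0 ≤ x) :
    Real.log (1 + c * x) ≤ Real.log (max 1 c) + Real.log (1 + x) := by
  rw [← Real.log_mul (by positivity) (by positivity)]
  refine Real.log_le_log (by positivity) ?_
  nlinarith [le_max_left 1 c, le_max_right 1 c]

section LogMoment

variable {Ω : Type*} [MeasurableSpace Ω] {P : Measure Ω} {q : Ω → ℝ}

lemma aemeasurable_sq_of_integrable_log (hint : Integrable (fun ω => Real.log (1 + q ω ^ 2)) P) :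
    AEMeasurable (fun ω => q ω ^ 2) P := by
  refine (hint.aemeasurable.exp.sub_const 1).congr (ae_of_all _ fun ω => ?_)
  simp only [Real.exp_log (by positivity : (0 : ℝ) < 1 + q ω ^ 2), add_sub_cancel_left]

lemma integrable_log_one_add_mul_sq [IsFiniteMeasure P]
    (hint : Integrable (fun ω => Real.log (1 + q ω ^ 2)) P) {c : ℝ} (hc : 0 ≤ c) :
    Integrable (fun ω => Real.log (1 + c * q ω ^ 2)) P := by
  refine Integrable.mono' ((integrable_const (Real.log (max 1 c))).add hint)
    (((aemeasurable_sq_of_integrable_log hint).const_mul c).const_add 1).log.aestronglyMeasurable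
    (ae_of_all _ fun ω => ?_)
  rw [Real.norm_of_nonneg (Real.log_nonneg (by nlinarith [sq_nonneg (q ω)]))]
  exact Real.log_one_add_mul_le hc (sq_nonneg _)

lemma logMoment_le [IsProbabilityMeasure P]
    (hint : Integrable (fun ω => Real.log (1 + q ω ^ 2)) P) {c : ℝ} (hc : 0 ≤ c) :
    logMoment P q c ≤ Real.log (max 1 c) + ∫ ω, Real.log (1 + q ω ^ 2) ∂P := by
  calc logMoment P q c ≤ ∫ ω, (Real.log (max 1 c) + Real.log (1 + q ω ^ 2)) ∂P :=
        integral_mono (integrable_log_one_add_mul_sq hint hc) ((integrable_const _).add hint)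
          fun ω => Real.log_one_add_mul_le hc (sq_nonneg _)
    _ = _ := by rw [integral_add (integrable_const _) hint, integral_const, probReal_univ,
          one_smul]

lemma logMoment_pos [IsFiniteMeasure P]
    (hint : Integrable (fun ω => Real.log (1 + q ω ^ 2)) P) (hne : 0 < P {ω | q ω ≠ 0})
    {c : ℝ} (hc : 0 < c) : 0 < logMoment P q c := by
  have hpos : ∀ ω, q ω ≠ 0 → 0 < Real.log (1 + c * q ω ^ 2) := fun ω hω =>
    Real.log_pos (by have := pow_pos (abs_pos.2 hω) 2; rw [sq_abs] at this; nlinarith)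
  refine (integral_pos_iff_support_of_nonneg_ae (ae_of_all _ fun ω => ?_)
    (integrable_log_one_add_mul_sq hint hc.le)).2 (hne.trans_le (measure_mono fun ω hω => ?_))
  · exact Real.log_nonneg (by nlinarith [sq_nonneg (q ω)])
  · exact (hpos ω hω).ne'

lemma exists_pos_measure_le_sq (hne : 0 < P {ω | q ω ≠ 0}) :
    ∃ δ > 0, 0 < P {ω | δ ≤ q ω ^ 2} := by
  have hcover : {ω | q ω ≠ 0} ⊆ ⋃ n : ℕ, {ω | 1 / ((n : ℝ) + 1) ≤ q ω ^ 2} := fun ω hω => by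
    obtain ⟨n, hn⟩ := exists_nat_one_div_lt (pow_pos (abs_pos.2 hω) 2)
    exact mem_iUnion.2 ⟨n, by rw [sq_abs] at hn; exact hn.le⟩
  obtain ⟨n, hn⟩ := exists_measure_pos_of_not_measure_iUnion_null
    (hne.trans_le (measure_mono hcover)).ne'
  exact ⟨_, by positivity, hn⟩

lemma tendsto_logMoment_atTop [IsFiniteMeasure P]
    (hint : Integrable (fun ω => Real.log (1 + q ω ^ 2)) P) (hne : 0 < P {ω | q ω ≠ 0}) :
    Tendsto (logMoment P q) atTop atTop := by
  obtain ⟨δ, hδ, hPδ⟩ := exists_pos_measure_le_sq hne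
  set m := P.real {ω | δ ≤ q ω ^ 2}
  have hm : 0 < m := ENNReal.toReal_pos hPδ.ne' (measure_ne_top _ _)
  have hlower : ∀ c, 0 ≤ c → m * Real.log (1 + c * δ) ≤ logMoment P q c := fun c hc => by
    have hmarkov := mul_meas_ge_le_integral_of_nonneg
      (ae_of_all _ fun ω => Real.log_nonneg (by nlinarith [sq_nonneg (q ω)]))
      (integrable_log_one_add_mul_sq hint hc) (Real.log (1 + c * δ))
    refine le_trans ?_ hmarkov
    rw [mul_comm]
    refine mul_le_mul_of_nonneg_left (measureReal_mono fun ω hω => ?_)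
      (Real.log_nonneg (by nlinarith))
    exact Real.log_le_log (by positivity) (by nlinarith [show δ ≤ q ω ^ 2 from hω])
  refine tendsto_atTop_mono' _ ((eventually_ge_atTop 0).mono hlower) ?_
  exact (Real.tendsto_log_atTop.comp (tendsto_atTop_add_const_left _ 1
    (tendsto_id.atTop_mul_const hδ))).const_mul_atTop hm

lemma continuousOn_logMoment [IsFiniteMeasure P]
    (hint : Integrable (fun ω => Real.log (1 + q ω ^ 2)) P) :
    ContinuousOn (logMoment P q) (Ioi 0) := by
  intro c (hc : 0 < c)
  have hnear : ∀ᶠ c' in 𝓝 c, c' ∈ Ioo 0 (c + 1) := Ioo_mem_nhds hc (by linarith)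
  refine (continuousAt_of_dominated (hnear.mono fun c' hc' =>
      (integrable_log_one_add_mul_sq hint hc'.1.le).aestronglyMeasurable)
    (hnear.mono fun c' hc' => ae_of_all _ fun ω => ?_)
    (integrable_log_one_add_mul_sq hint (by linarith : (0 : ℝ) ≤ c + 1))
    (ae_of_all _ fun ω => ?_)).continuousWithinAt
  · have hq := sq_nonneg (q ω)
    rw [Real.norm_of_nonneg (Real.log_nonneg (by nlinarith [hc'.1]))]
    exact Real.log_le_log (by nlinarith [hc'.1]) (by nlinarith [hc'.2])
  · exact ContinuousAt.log (by fun_prop) (by positivity)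

end LogMoment

/-- Writing `ζ = x + iy` with `|ζ| = t`, the condition `Re (ζ + 1/ζ) = -E` reads
`x (1 + 1/t²) = -E`; this fixes `x`, and then `y² = t² - x²`. -/
noncomputable def curveImSq (E t : ℝ) : ℝ := t ^ 2 - (E * t ^ 2 / (t ^ 2 + 1)) ^ 2

noncomputable def curvePoint (E t : ℝ) : ℂ := ⟨-(E * t ^ 2 / (t ^ 2 + 1)), √(curveImSq E t)⟩

section Curve

variable {E t : ℝ}

lemma curvePoint_im_sq (h : 0 ≤ curveImSq E t) : (curvePoint E t).im ^ 2 = curveImSq E t :=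
  Real.sq_sqrt h

lemma normSq_curvePoint (h : 0 ≤ curveImSq E t) : normSq (curvePoint E t) = t ^ 2 := by
  rw [normSq_apply, ← sq, ← sq, curvePoint_im_sq h, curveImSq]
  simp only [curvePoint]
  ring

lemma norm_curvePoint (ht : 0 ≤ t) (h : 0 ≤ curveImSq E t) : ‖curvePoint E t‖ = t := by
  rw [norm_def, normSq_curvePoint h, Real.sqrt_sq ht]

lemma re_curvePoint_add_inv (ht : 0 < t) (h : 0 ≤ curveImSq E t) :
    (curvePoint E t + 1 / curvePoint E t).re = -E := by
  rw [add_re, one_div, inv_re, normSq_curvePoint h]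
  simp only [curvePoint]
  field_simp
  ring

lemma curveImSq_eq (ht : 0 < t) :
    curveImSq E t = t ^ 2 * ((t ^ 2 + 1) ^ 2 - (E * t) ^ 2) / (t ^ 2 + 1) ^ 2 := by
  rw [curveImSq]
  field_simp

lemma curveImSq_pos_iff (ht : 0 < t) : 0 < curveImSq E t ↔ |E| * t < t ^ 2 + 1 := by
  rw [curveImSq_eq ht, div_pos_iff_of_pos_right (by positivity),
    mul_pos_iff_of_pos_left (by positivity), sub_pos, sq_lt_sq, abs_mul, abs_of_pos ht,
    abs_of_pos (by positivity : 0 < t ^ 2 + 1)]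

lemma curveImSq_pos_of_le {a : ℝ} (ha : 1 ≤ a) (hat : a ≤ t) (h : 0 < curveImSq E a) :
    0 < curveImSq E t := by
  rw [curveImSq_pos_iff (by linarith)] at h ⊢
  have ht : 0 < t := by linarith
  have hgap : 0 ≤ (t - a) * (a * t - 1) := mul_nonneg (by linarith) (by nlinarith)
  nlinarith [mul_lt_mul_of_pos_right h ht]

lemma sq_sub_sq_le_curveImSq : t ^ 2 - E ^ 2 ≤ curveImSq E t := by
  have hfrac : t ^ 2 / (t ^ 2 + 1) ≤ 1 := div_le_one_of_le₀ (by linarith) (by positivity)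
  have : (E * t ^ 2 / (t ^ 2 + 1)) ^ 2 ≤ E ^ 2 := by
    rw [mul_div_assoc, mul_pow]
    exact mul_le_of_le_one_right (sq_nonneg E) (pow_le_one₀ (by positivity) hfrac)
  rw [curveImSq]
  linarith

lemma curveImSq_le_sq : curveImSq E t ≤ t ^ 2 :=
  sub_le_self _ (sq_nonneg _)

lemma continuous_curveImSq : Continuous (curveImSq E) := by
  unfold curveImSq
  fun_prop (disch := intro; positivity)

lemma tendsto_curveImSq_atTop : Tendsto (curveImSq E) atTop atTop :=
  tendsto_atTop_mono (fun _ => sq_sub_sq_le_curveImSq)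
    (tendsto_atTop_add_const_right _ _ (tendsto_pow_atTop two_ne_zero))

lemma exists_tendsto_curveImSq_nhdsGT_zero (hE : 2 ≤ |E|) :
    ∃ t₀, 1 ≤ t₀ ∧ Tendsto (curveImSq E) (𝓝[>] t₀) (𝓝[>] 0) := by
  set t₀ := (|E| + √(E ^ 2 - 4)) / 2
  have hs : √(E ^ 2 - 4) ^ 2 = E ^ 2 - 4 := Real.sq_sqrt (by nlinarith [sq_abs E])
  have hs0 := Real.sqrt_nonneg (E ^ 2 - 4)
  have ht₀ : 1 ≤ t₀ := by simp only [t₀]; linarith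
  have hroot : t₀ ^ 2 + 1 = |E| * t₀ := by linear_combination hs / 4 - sq_abs E / 4
  have hzero : curveImSq E t₀ = 0 := by
    have : (E * t₀) ^ 2 = (t₀ ^ 2 + 1) ^ 2 := by rw [hroot, mul_pow, mul_pow, sq_abs]
    rw [curveImSq_eq (by linarith), this, sub_self, mul_zero, zero_div]
  have hpos : ∀ t > t₀, 0 < curveImSq E t := fun t ht => by
    rw [curveImSq_pos_iff (by linarith)]
    nlinarith [mul_pos (sub_pos.2 ht) (by nlinarith : 0 < t₀ * t - 1)]
  refine ⟨t₀, ht₀, tendsto_nhdsWithin_iff.2 ⟨?_, eventually_nhdsWithin_of_forall hpos⟩⟩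
  exact hzero ▸ continuous_curveImSq.continuousWithinAt.tendsto

end Curve

noncomputable def curveLogMoment {Ω : Type*} [MeasurableSpace Ω] (P : Measure Ω) (q : Ω → ℝ)
    (E t : ℝ) : ℝ :=
  ∫ ω, Real.log (q ω ^ 2 / curveImSq E t + 1 / t ^ 4) ∂P

section CurveLogMoment

variable {Ω : Type*} [MeasurableSpace Ω] {P : Measure Ω} [IsProbabilityMeasure P] {q : Ω → ℝ}

lemma curveLogMoment_eq (hint : Integrable (fun ω => Real.log (1 + q ω ^ 2)) P) {E t : ℝ}
    (ht : 0 < t) (hw : 0 < curveImSq E t) :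
    curveLogMoment P q E t = logMoment P q (t ^ 4 / curveImSq E t) - 4 * Real.log t := by
  have hpointwise : ∀ ω, Real.log (q ω ^ 2 / curveImSq E t + 1 / t ^ 4)
      = Real.log (1 + t ^ 4 / curveImSq E t * q ω ^ 2) - 4 * Real.log t := fun ω => by
    rw [show q ω ^ 2 / curveImSq E t + 1 / t ^ 4
        = (1 + t ^ 4 / curveImSq E t * q ω ^ 2) / t ^ 4 by field_simp; ring,
      Real.log_div (by positivity) (by positivity), Real.log_pow]
    push_cast
    ring
  simp only [curveLogMoment, hpointwise]
  rw [integral_sub (integrable_log_one_add_mul_sq hint (by positivity)) (integrable_const _),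
    integral_const, probReal_univ, one_smul, logMoment]

lemma eventually_curveLogMoment_neg (hint : Integrable (fun ω => Real.log (1 + q ω ^ 2)) P)
    (E : ℝ) : ∀ᶠ t in atTop, 0 < curveImSq E t ∧ curveLogMoment P q E t < 0 := by
  set K := ∫ ω, Real.log (1 + q ω ^ 2) ∂P
  filter_upwards [tendsto_curveImSq_atTop.eventually_gt_atTop (Real.exp K),
    eventually_ge_atTop 1] with t hw ht
  have hw0 : 0 < curveImSq E t := (Real.exp_pos K).trans hw
  have hratio : 1 ≤ t ^ 4 / curveImSq E t := by
    rw [one_le_div hw0]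
    exact curveImSq_le_sq.trans (pow_le_pow_right₀ ht (by norm_num))
  refine ⟨hw0, ?_⟩
  calc curveLogMoment P q E t
      = logMoment P q (t ^ 4 / curveImSq E t) - 4 * Real.log t :=
        curveLogMoment_eq hint (by linarith) hw0
    _ ≤ Real.log (t ^ 4 / curveImSq E t) + K - 4 * Real.log t := by
        have := logMoment_le hint (zero_le_one.trans hratio)
        rw [max_eq_right hratio] at this
        linarith
    _ = K - Real.log (curveImSq E t) := by
        rw [Real.log_div (by positivity) hw0.ne', Real.log_pow]
        push_cast
        ring
    _ < 0 := by
        have := Real.log_lt_log (Real.exp_pos K) hw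
        rw [Real.log_exp] at this
        linarith

lemma exists_curveLogMoment_pos (hint : Integrable (fun ω => Real.log (1 + q ω ^ 2)) P)
    (hne : 0 < P {ω | q ω ≠ 0}) (E : ℝ) :
    ∃ a, 1 ≤ a ∧ 0 < curveImSq E a ∧ 0 < curveLogMoment P q E a := by
  rcases lt_or_ge |E| 2 with hE | hE
  · have hw : 0 < curveImSq E 1 := (curveImSq_pos_iff one_pos).2 (by linarith)
    refine ⟨1, le_rfl, hw, ?_⟩
    rw [curveLogMoment_eq hint one_pos hw, Real.log_one, mul_zero, sub_zero]
    exact logMoment_pos hint hne (by positivity)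
  · obtain ⟨t₀, ht₀, hlim⟩ := exists_tendsto_curveImSq_nhdsGT_zero hE
    have hw : ∀ᶠ t in 𝓝[>] t₀, 0 < curveImSq E t := hlim self_mem_nhdsWithin
    have hgt : ∀ᶠ t in 𝓝[>] t₀, t₀ < t := self_mem_nhdsWithin
    have hratio : Tendsto (fun t => t ^ 4 / curveImSq E t) (𝓝[>] t₀) atTop := by
      simp_rw [div_eq_mul_inv]
      exact Tendsto.pos_mul_atTop (by positivity)
        ((continuous_pow 4).continuousAt.tendsto.mono_left nhdsWithin_le_nhds)
        (tendsto_inv_nhdsGT_zero.comp hlim)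
    have hlog : Tendsto (fun t => -(4 * Real.log t)) (𝓝[>] t₀) (𝓝 (-(4 * Real.log t₀))) :=
      (((Real.continuousAt_log (by positivity)).tendsto.mono_left nhdsWithin_le_nhds).const_mul
        4).neg
    have hF : Tendsto (curveLogMoment P q E) (𝓝[>] t₀) atTop := by
      refine (((tendsto_logMoment_atTop hint hne).comp hratio).atTop_add hlog).congr' ?_
      filter_upwards [hw, hgt] with t hwt ht
      rw [curveLogMoment_eq hint (by linarith) hwt, sub_eq_add_neg]
      rfl
    obtain ⟨a, hFa, hwa, ha⟩ := ((hF.eventually_gt_atTop 0).and (hw.and hgt)).exists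
    exact ⟨a, by linarith, hwa, hFa⟩

lemma continuousOn_curveLogMoment (hint : Integrable (fun ω => Real.log (1 + q ω ^ 2)) P)
    {E : ℝ} {s : Set ℝ} (hs : ∀ t ∈ s, 0 < t ∧ 0 < curveImSq E t) :
    ContinuousOn (curveLogMoment P q E) s := by
  have hratio : ContinuousOn (fun t => t ^ 4 / curveImSq E t) s :=
    (continuous_pow 4).continuousOn.div continuous_curveImSq.continuousOn
      fun t ht => (hs t ht).2.ne'
  refine ((((continuousOn_logMoment hint).comp hratio fun t ht => ?_).sub
    ((Real.continuousOn_log.mono fun t ht => (hs t ht).1.ne').const_smul (4 : ℝ))).congr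
    fun t ht => curveLogMoment_eq hint (hs t ht).1 (hs t ht).2)
  exact div_pos (pow_pos (hs t ht).1 4) (hs t ht).2

lemma exists_curveLogMoment_eq_zero (hint : Integrable (fun ω => Real.log (1 + q ω ^ 2)) P)
    (hne : 0 < P {ω | q ω ≠ 0}) (E : ℝ) :
    ∃ t, 1 < t ∧ 0 < curveImSq E t ∧ curveLogMoment P q E t = 0 := by
  obtain ⟨a, ha, hwa, hFa⟩ := exists_curveLogMoment_pos hint hne E
  obtain ⟨b, ⟨-, hFb⟩, hab⟩ :=
    ((eventually_curveLogMoment_neg hint E).and (eventually_ge_atTop a)).exists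
  have hpos : ∀ t ∈ Icc a b, 0 < t ∧ 0 < curveImSq E t := fun t ht =>
    ⟨by linarith [ht.1], curveImSq_pos_of_le ha ht.1 hwa⟩
  obtain ⟨t, ht, hFt⟩ :=
    intermediate_value_Ioc' hab (continuousOn_curveLogMoment hint hpos) ⟨hFb.le, hFa⟩
  exact ⟨t, ha.trans_lt ht.1, (hpos t (Ioc_subset_Icc_self ht)).2, hFt⟩

end CurveLogMoment

theorem exists_zeta_symmetric_general {Ω : Type*} [MeasurableSpace Ω] (P : Measure Ω)
    [IsProbabilityMeasure P] (q : Ω → ℝ)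
    (hint : Integrable (fun ω => Real.log (1 + (q ω) ^ 2)) P)
    (hne : 0 < P {ω | q ω ≠ 0}) :
    ∀ E : ℝ, ∃ ζ : ℂ, 0 < ζ.im ∧ 1 < ‖ζ‖ ∧ (ζ + 1 / ζ).re + E = 0 ∧
      (∫ ω, Real.log ((q ω) ^ 2 / ζ.im ^ 2 + 1 / ‖ζ‖ ^ 4) ∂P) = 0 := by
  intro E
  obtain ⟨t, ht, hw, hF⟩ := exists_curveLogMoment_eq_zero hint hne E
  have hnorm := norm_curvePoint (by linarith) hw.le
  refine ⟨curvePoint E t, Real.sqrt_pos.2 hw, hnorm.symm ▸ ht, ?_, ?_⟩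
  · rw [re_curvePoint_add_inv (by linarith) hw.le, neg_add_cancel]
  · rwa [curvePoint_im_sq hw.le, hnorm]

/-- Lemma 5.2 of the paper. For a symmetric random variable `q` with
`E[log(1+q²)] < ∞` and `P(q ≠ 0) > 0`, for every real `E` there is `ζ` in the open upper
half-plane with `|ζ| > 1` such that `Re(ζ + 1/ζ) + E = 0` and
`E[log(q²/(Im ζ)² + 1/|ζ|⁴)] = 0`. -/
theorem exists_zeta_symmetric {Ω : Type*} [MeasurableSpace Ω] (P : Measure Ω)
    [IsProbabilityMeasure P] (q : Ω → ℝ) (hqmeas : Measurable q)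
    (hsymm : Measure.map q P = Measure.map (fun ω => -(q ω)) P)
    (hint : Integrable (fun ω => Real.log (1 + (q ω) ^ 2)) P)
    (hne : 0 < P {ω | q ω ≠ 0}) :
    ∀ E : ℝ, ∃ ζ : ℂ, 0 < ζ.im ∧ 1 < ‖ζ‖ ∧ (ζ + 1 / ζ).re + E = 0 ∧
      (∫ ω, Real.log ((q ω) ^ 2 / ζ.im ^ 2 + 1 / ‖ζ‖ ^ 4) ∂P) = 0 :=
  exists_zeta_symmetric_general P q hint hne
end

section
/- For all real numbers a, b, c, d with ad − bc = 1, define γ : ℝ → ℂ by γ(t) = (a·i·eᵗ + b)/(c·i·eᵗ + d). Then the function t ↦ log( Im γ(t) ) is concave on ℝ. -/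
open Complex

/-! Along the geodesic, `Im γ(t) = eᵗ / (c² e²ᵗ + d²)`, so
`log (Im γ(t)) = t - log (c² e²ᵗ + d²)`. The subtracted term is convex because `log (p eᵗ + q)` has the increasing derivative
`1 - q / (p eᵗ + q)` when `p, q ≥ 0`. -/

theorem Complex.im_moebius (a b c d : ℝ) (z : ℂ) :
    ((a * z + b) / (c * z + d)).im = (a * d - b * c) * z.im / normSq (c * z + d) := by
  simp only [div_im, add_re, add_im, mul_re, mul_im, ofReal_re, ofReal_im]
  ring

theorem Real.convexOn_log_mul_exp_add {p q : ℝ} (hp : 0 ≤ p) (hq : 0 ≤ q) :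
    ConvexOn ℝ Set.univ fun t => Real.log (p * Real.exp t + q) := by
  rcases hp.eq_or_lt with rfl | hp
  · simpa using convexOn_const (Real.log q) convex_univ
  have hpos : ∀ t, 0 < p * Real.exp t + q := fun t => by positivity
  have hderiv : ∀ t, HasDerivAt (fun t => Real.log (p * Real.exp t + q))
      (1 - q / (p * Real.exp t + q)) t := fun t => by
    convert (((Real.hasDerivAt_exp t).const_mul p).add_const q).log (hpos t).ne' using 1
    field_simp
    ring
  refine Monotone.convexOn_univ_of_deriv (fun t => (hderiv t).differentiableAt) ?_
  rw [funext fun t => (hderiv t).deriv]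
  intro s t hst
  dsimp only
  gcongr

/-- Geodesic concavity of `z ↦ log(Im z)` on the hyperbolic upper half-plane: along every
unit-speed geodesic `γ(t) = (a i eᵗ + b)/(c i eᵗ + d)` (with `ad − bc = 1`), the function
`t ↦ log(Im γ(t))` is concave on `ℝ`. -/
theorem geodesic_concavity_log_im (a b c d : ℝ) (h : a * d - b * c = 1) (γ : ℝ → ℂ)
    (hγ : ∀ t : ℝ, γ t = ((a : ℂ) * Complex.I * (Real.exp t : ℂ) + (b : ℂ)) /
        ((c : ℂ) * Complex.I * (Real.exp t : ℂ) + (d : ℂ))) :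
    ConcaveOn ℝ Set.univ (fun t : ℝ => Real.log ((γ t).im)) := by
  have hcd : c ≠ 0 ∨ d ≠ 0 := by
    by_contra! hcd
    simp [hcd.1, hcd.2] at h
  have hnormSq : ∀ t, normSq (c * (I * Real.exp t) + d) = c ^ 2 * Real.exp (2 * t) + d ^ 2 :=
    fun t => by
      simp only [normSq_apply, add_re, add_im, mul_re, mul_im, ofReal_re, ofReal_im, I_re, I_im]
      rw [two_mul, Real.exp_add]
      ring
  have him : ∀ t, (γ t).im = Real.exp t / (c ^ 2 * Real.exp (2 * t) + d ^ 2) := fun t => by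
    rw [hγ, mul_assoc, mul_assoc, im_moebius, h, hnormSq]
    simp only [mul_im, I_re, I_im, ofReal_re, ofReal_im]
    ring
  have hpos : ∀ t, 0 < c ^ 2 * Real.exp (2 * t) + d ^ 2 := fun t => by
    rcases hcd with hc | hd <;> positivity
  have hconvex : ConvexOn ℝ Set.univ fun t => Real.log (c ^ 2 * Real.exp (2 * t) + d ^ 2) := by
    simpa only [Set.preimage_univ, Function.comp_def, LinearMap.lsmul_apply, smul_eq_mul] using
      (Real.convexOn_log_mul_exp_add (sq_nonneg c) (sq_nonneg d)).comp_linearMap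
        (LinearMap.lsmul ℝ ℝ 2)
  have hlog : (fun t => Real.log (γ t).im) =
      fun t => t - Real.log (c ^ 2 * Real.exp (2 * t) + d ^ 2) :=
    funext fun t => by rw [him, Real.log_div (Real.exp_ne_zero t) (hpos t).ne', Real.log_exp]
  rw [hlog]
  exact (concaveOn_id convex_univ).sub hconvex
end

section
/- Let K ∈ (0, ∞), let ν : ℝ → [0, ∞) be a bounded measurable probability density vanishing outside [−K, K] with essential supremum ‖ν‖_∞, and let s ∈ (0, 1/2). Then for all w, z, z′ ∈ ℂ: ∫_ℝ | |w + z − q|^{−s} − |w + z′ − q|^{−s} | ν(q) dq ≤ (2 ‖ν‖_∞ K^{1−2s} / (1 − 2s)) · |z − z′|^s. -/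
/-!
Pointwise, `|x^{-s} - y^{-s}| ≤ |x - y|^s (x^{-2s} + y^{-2s}) / 2` for `x, y > 0`: write the
difference as `(y^s - x^s) x^{-s} y^{-s}`, bound the first factor by subadditivity of `t ↦ t^s`
and the second by AM–GM. With `x = |w + z - q|`, `y = |w + z' - q|` we have
`|x - y| ≤ |z - z'|` and `x ≥ |q - Re (w + z)|`. Bounding `ν` by `Cν · 1_{[-K,K]}`, it remains
to see `∫_{-K}^{K} |q - t|^{-2s} dq ≤ 2 K^{1-2s} / (1 - 2s)`, the value at `t = 0`: among
windows of fixed length, the centred one carries the most mass of the even, decreasing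
`|u|^{-2s}`.
-/

open MeasureTheory Complex intervalIntegral Set

namespace Real

lemma rpow_sub_rpow_le_rpow_sub {p x y : ℝ} (hp0 : 0 ≤ p) (hp1 : p ≤ 1) (hx : 0 ≤ x)
    (hxy : x ≤ y) : y ^ p - x ^ p ≤ (y - x) ^ p := by
  have := rpow_add_le_add_rpow hx (sub_nonneg.mpr hxy) hp0 hp1
  rw [add_sub_cancel] at this
  linarith

lemma rpow_add_rpow_le_two_mul_rpow_half_add {p x y : ℝ} (hp0 : 0 ≤ p) (hp1 : p ≤ 1)
    (hx : 0 ≤ x) (hy : 0 ≤ y) : x ^ p + y ^ p ≤ 2 * ((x + y) / 2) ^ p := by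
  have := (concaveOn_rpow hp0 hp1).2 (mem_Ici.mpr hx) (mem_Ici.mpr hy)
    (by norm_num : (0 : ℝ) ≤ 1 / 2) (by norm_num : (0 : ℝ) ≤ 1 / 2) (by norm_num)
  simp only [smul_eq_mul] at this
  rw [show 1 / 2 * x + 1 / 2 * y = (x + y) / 2 by ring] at this
  linarith

lemma abs_rpow_neg_sub_rpow_neg_le {s x y : ℝ} (hs0 : 0 ≤ s) (hs1 : s ≤ 1) (hx : 0 < x)
    (hy : 0 < y) :
    |x ^ (-s) - y ^ (-s)| ≤ |x - y| ^ s * ((x ^ (-(2 * s)) + y ^ (-(2 * s))) / 2) := by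
  wlog hxy : x ≤ y generalizing x y
  · rw [abs_sub_comm, abs_sub_comm x, add_comm]
    exact this hy hx (le_of_not_ge hxy)
  have hdiff : x ^ (-s) - y ^ (-s) = (y ^ s - x ^ s) * (x ^ (-s) * y ^ (-s)) := by
    rw [rpow_neg hx.le, rpow_neg hy.le]
    field_simp
  have hholder : y ^ s - x ^ s ≤ |x - y| ^ s := by
    rw [abs_sub_comm, abs_of_nonneg (sub_nonneg.mpr hxy)]
    exact rpow_sub_rpow_le_rpow_sub hs0 hs1 hx.le hxy
  have hamgm : x ^ (-s) * y ^ (-s) ≤ (x ^ (-(2 * s)) + y ^ (-(2 * s))) / 2 := by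
    rw [show -(2 * s) = -s * 2 by ring, rpow_mul hx.le, rpow_mul hy.le, rpow_two, rpow_two]
    linarith [two_mul_le_add_sq (x ^ (-s)) (y ^ (-s))]
  rw [abs_of_nonneg (sub_nonneg.mpr (rpow_le_rpow_of_nonpos hx hxy (by linarith))), hdiff]
  exact mul_le_mul hholder hamgm (by positivity) (by positivity)

end Real

lemma integral_abs_rpow_of_nonneg {r a b : ℝ} (hr : -1 < r) (ha : 0 ≤ a) (hb : 0 ≤ b) :
    ∫ x in a..b, |x| ^ r = (b ^ (r + 1) - a ^ (r + 1)) / (r + 1) := by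
  rw [← integral_rpow (Or.inl hr)]
  refine integral_congr fun x hx => ?_
  simp only [abs_of_nonneg ((le_min ha hb).trans hx.1)]

lemma locallyIntegrable_abs_rpow {r : ℝ} (hr : -1 < r) :
    LocallyIntegrable (fun x : ℝ => |x| ^ r) := by
  refine locallyIntegrable_of_norm_le_rpow (α := -r) (C := 1) (by simp) (by simp; linarith)
    (ae_of_all _ fun x => ?_) (measurable_id.abs.pow_const r).aestronglyMeasurable
  simp [abs_of_nonneg (Real.rpow_nonneg (abs_nonneg x) r)]

lemma intervalIntegrable_abs_sub_rpow {r : ℝ} (hr : -1 < r) (t a b : ℝ) :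
    IntervalIntegrable (fun x => |x - t| ^ r) volume a b := by
  simpa using (((locallyIntegrable_abs_rpow hr).integrableOn_isCompact
    isCompact_uIcc).intervalIntegrable (a := a - t) (b := b - t)).comp_sub_right t

lemma integral_abs_rpow_of_nonpos_of_nonneg {r a b : ℝ} (hr : -1 < r) (ha : a ≤ 0)
    (hb : 0 ≤ b) : ∫ x in a..b, |x| ^ r = ((-a) ^ (r + 1) + b ^ (r + 1)) / (r + 1) := by
  have hint (c d : ℝ) : IntervalIntegrable (fun x => |x| ^ r) volume c d := by
    simpa using intervalIntegrable_abs_sub_rpow hr 0 c d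
  have hneg : ∫ x in a..0, |x| ^ r = ∫ x in 0..-a, |x| ^ r := by
    simpa using integral_comp_neg (a := a) (b := 0) fun x => |x| ^ r
  rw [← integral_add_adjacent_intervals (hint a 0) (hint 0 b), hneg,
    integral_abs_rpow_of_nonneg hr le_rfl (neg_nonneg.mpr ha),
    integral_abs_rpow_of_nonneg hr le_rfl hb, Real.zero_rpow (by linarith), sub_zero, sub_zero,
    add_div]

lemma integral_abs_sub_rpow_le {r K : ℝ} (hr : -1 < r) (hr0 : r ≤ 0) (hK : 0 ≤ K) (t : ℝ) :
    ∫ q in (-K)..K, |q - t| ^ r ≤ 2 * K ^ (r + 1) / (r + 1) := by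
  wlog ht : 0 ≤ t generalizing t
  · have hsymm := integral_comp_neg (a := -K) (b := K) fun q => |q - t| ^ r
    rw [neg_neg] at hsymm
    rw [← hsymm]
    simpa [abs_sub_comm, add_comm] using this (-t) (by linarith)
  have hp : 0 < r + 1 := by linarith
  have hp1 : r + 1 ≤ 1 := by linarith
  rw [integral_comp_sub_right (fun x => |x| ^ r)]
  rcases le_total t K with htK | hKt
  · rw [integral_abs_rpow_of_nonpos_of_nonneg hr (by linarith) (by linarith)]
    gcongr
    have hconc := Real.rpow_add_rpow_le_two_mul_rpow_half_add hp.le hp1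
      (x := -(-K - t)) (y := K - t) (by linarith) (by linarith)
    rwa [show (-(-K - t) + (K - t)) / 2 = K by ring] at hconc
  · have hsymm : ∫ x in (-K - t)..(K - t), |x| ^ r = ∫ x in (t - K)..(t + K), |x| ^ r := by
      have h := integral_comp_neg (a := t - K) (b := t + K) fun x => |x| ^ r
      simp only [abs_neg] at h
      rw [h, neg_sub, show -(t + K) = -K - t by ring]
    rw [hsymm, integral_abs_rpow_of_nonneg hr (by linarith) (by linarith)]
    gcongr
    calc (t + K) ^ (r + 1) - (t - K) ^ (r + 1) ≤ (t + K - (t - K)) ^ (r + 1) :=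
          Real.rpow_sub_rpow_le_rpow_sub hp.le hp1 (by linarith) (by linarith)
      _ = 2 ^ (r + 1) * K ^ (r + 1) := by
          rw [show t + K - (t - K) = 2 * K by ring, Real.mul_rpow zero_le_two hK]
      _ ≤ 2 * K ^ (r + 1) := by
          gcongr
          exact Real.rpow_le_self_of_one_le one_le_two hp1

lemma integrable_indicator_Icc_abs_sub_rpow {r : ℝ} (hr : -1 < r) (K t : ℝ) :
    Integrable ((Icc (-K) K).indicator fun q => |q - t| ^ r) := by
  have h := intervalIntegrable_abs_sub_rpow hr t (-K) K
  rw [intervalIntegrable_iff'] at h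
  exact (h.mono_set Icc_subset_uIcc).integrable_indicator measurableSet_Icc

lemma integral_indicator_Icc_abs_sub_rpow_le {r K : ℝ} (hr : -1 < r) (hr0 : r ≤ 0)
    (hK : 0 ≤ K) (t : ℝ) :
    ∫ q, (Icc (-K) K).indicator (fun q => |q - t| ^ r) q ≤ 2 * K ^ (r + 1) / (r + 1) := by
  rw [MeasureTheory.integral_indicator measurableSet_Icc, integral_Icc_eq_integral_Ioc,
    ← integral_of_le (by linarith)]
  exact integral_abs_sub_rpow_le hr hr0 hK t

lemma abs_norm_sub_rpow_neg_sub_le {a b : ℂ} {q s : ℝ} (hs0 : 0 ≤ s) (hs1 : s ≤ 1)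
    (ha : q ≠ a.re) (hb : q ≠ b.re) :
    |‖a - q‖ ^ (-s) - ‖b - q‖ ^ (-s)| ≤
      ‖a - b‖ ^ s * ((|q - a.re| ^ (-(2 * s)) + |q - b.re| ^ (-(2 * s))) / 2) := by
  have hpos (c : ℂ) (hc : q ≠ c.re) : 0 < ‖c - q‖ :=
    norm_pos_iff.mpr (sub_ne_zero.mpr fun h => hc (by simp [h]))
  have hre (c : ℂ) (hc : q ≠ c.re) : ‖c - q‖ ^ (-(2 * s)) ≤ |q - c.re| ^ (-(2 * s)) := by
    refine Real.rpow_le_rpow_of_nonpos (abs_pos.mpr (sub_ne_zero.mpr hc)) ?_ (by linarith)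
    simpa [abs_sub_comm] using abs_re_le_norm (c - q)
  calc _ ≤ |‖a - q‖ - ‖b - q‖| ^ s *
        ((‖a - q‖ ^ (-(2 * s)) + ‖b - q‖ ^ (-(2 * s))) / 2) :=
        Real.abs_rpow_neg_sub_rpow_neg_le hs0 hs1 (hpos a ha) (hpos b hb)
    _ ≤ _ := by
        gcongr ?_ ^ s * ((?_ + ?_) / 2)
        · simpa using abs_norm_sub_norm_le (a - q) (b - q)
        · exact hre a ha
        · exact hre b hb

lemma ae_abs_norm_sub_rpow_neg_sub_mul_le {ν : ℝ → ℝ} {K Cν s : ℝ}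
    (hνnonneg : ∀ q, 0 ≤ ν q) (hνsupp : ∀ q, q ∉ Icc (-K) K → ν q = 0)
    (hνbd : ∀ᵐ q : ℝ, ν q ≤ Cν) (hs0 : 0 ≤ s) (hs1 : s ≤ 1) (a b : ℂ) :
    ∀ᵐ q : ℝ, |‖a - q‖ ^ (-s) - ‖b - q‖ ^ (-s)| * ν q ≤
      Cν * ‖a - b‖ ^ s / 2 * ((Icc (-K) K).indicator (fun q => |q - a.re| ^ (-(2 * s))) q +
        (Icc (-K) K).indicator (fun q => |q - b.re| ^ (-(2 * s))) q) := by
  filter_upwards [hνbd, Measure.ae_ne volume a.re, Measure.ae_ne volume b.re] with q hqC ha hb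
  by_cases hq : q ∈ Icc (-K) K
  · simp only [indicator_of_mem hq]
    calc _ ≤ _ := mul_le_mul (abs_norm_sub_rpow_neg_sub_le hs0 hs1 ha hb) hqC (hνnonneg q)
          (by positivity)
      _ = _ := by ring
  · simp [hq, hνsupp q hq]

theorem fractional_moment_holder_continuity_general (K : ℝ) (hK : 0 < K) (ν : ℝ → ℝ)
    (hνnonneg : ∀ q, 0 ≤ ν q)
    (hνsupp : ∀ q, q ∉ Set.Icc (-K) K → ν q = 0)
    (Cν : ℝ) (hνbd : ∀ᵐ q : ℝ, ν q ≤ Cν)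
    (s : ℝ) (hs0 : 0 < s) (hs1 : s < 1 / 2) :
    ∀ w z z' : ℂ,
      (∫ q : ℝ, |(‖w + z - (q : ℂ)‖) ^ (-s)
          - (‖w + z' - (q : ℂ)‖) ^ (-s)| * ν q) ≤
        (2 * Cν * K ^ (1 - 2 * s) / (1 - 2 * s)) * (‖z - z'‖) ^ s := by
  intro w z z'
  have hCν : 0 ≤ Cν := by
    obtain ⟨q, hq⟩ := hνbd.exists
    exact (hνnonneg q).trans hq
  set g : ℝ → ℝ → ℝ := fun t => (Icc (-K) K).indicator fun q => |q - t| ^ (-(2 * s))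
  have hg_int (t : ℝ) : Integrable (g t) :=
    integrable_indicator_Icc_abs_sub_rpow (by linarith) K t
  have hg_le (t : ℝ) : ∫ q, g t q ≤ 2 * K ^ (1 - 2 * s) / (1 - 2 * s) := by
    have h := integral_indicator_Icc_abs_sub_rpow_le (r := -(2 * s)) (by linarith) (by linarith)
      hK.le t
    rwa [show -(2 * s) + 1 = 1 - 2 * s by ring] at h
  have hmaj := ae_abs_norm_sub_rpow_neg_sub_mul_le hνnonneg hνsupp hνbd hs0.le (by linarith)
    (w + z) (w + z')
  rw [add_sub_add_left_eq_sub] at hmaj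
  set c := Cν * ‖z - z'‖ ^ s / 2
  have hc : 0 ≤ c := by positivity
  calc _ ≤ ∫ q, c * (g (w + z).re q + g (w + z').re q) :=
        integral_mono_of_nonneg (ae_of_all _ fun q => mul_nonneg (abs_nonneg _) (hνnonneg q))
          (((hg_int _).add (hg_int _)).const_mul c) hmaj
    _ = c * ((∫ q, g (w + z).re q) + ∫ q, g (w + z').re q) := by
        rw [MeasureTheory.integral_const_mul, integral_add (hg_int _) (hg_int _)]
    _ ≤ c * (2 * K ^ (1 - 2 * s) / (1 - 2 * s) + 2 * K ^ (1 - 2 * s) / (1 - 2 * s)) := by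
        gcongr <;> exact hg_le _
    _ = _ := by ring

/-- Hölder-type continuity in the spectral parameter (cf. (6.4)–(6.5) of the paper): for a
bounded probability density `ν` supported in `[−K, K]` with (essential) bound `Cν` and
`s ∈ (0, 1/2)`, for all `w, z, z' ∈ ℂ`,
`∫ | |w+z−q|^{−s} − |w+z'−q|^{−s} | ν(q) dq ≤ (2 Cν K^{1−2s}/(1−2s)) |z − z'|^s`. -/
theorem fractional_moment_holder_continuity (K : ℝ) (hK : 0 < K) (ν : ℝ → ℝ)
    (hνmeas : Measurable ν) (hνnonneg : ∀ q, 0 ≤ ν q)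
    (hνsupp : ∀ q, q ∉ Set.Icc (-K) K → ν q = 0)
    (hνprob : ∫ q : ℝ, ν q = 1)
    (Cν : ℝ) (hνbd : ∀ᵐ q : ℝ, ν q ≤ Cν)
    (s : ℝ) (hs0 : 0 < s) (hs1 : s < 1 / 2) :
    ∀ w z z' : ℂ,
      (∫ q : ℝ, |(‖w + z - (q : ℂ)‖) ^ (-s)
          - (‖w + z' - (q : ℂ)‖) ^ (-s)| * ν q) ≤
        (2 * Cν * K ^ (1 - 2 * s) / (1 - 2 * s)) * (‖z - z'‖) ^ s :=
  fractional_moment_holder_continuity_general K hK ν hνnonneg hνsupp Cν hνbd s hs0 hs1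
end

section
/- Let K ∈ (0, ∞), s ∈ (0, 1) and κ > 0. Let ν : ℝ → [0, ∞) be a bounded measurable probability density vanishing outside [−K, K] with essential supremum ‖ν‖_∞, and let τ : ℝ → [0, ∞) be a bounded measurable probability density vanishing outside [−1, 1] with essential supremum ‖τ‖_∞. Then for every w ∈ ℝ: ∫_ℝ ∫_ℝ |w − r − κ p|^{−s} ν(r) τ(p) dr dp ≤ 4 K ‖ν‖_∞ ‖τ‖_∞ κ^{−s} / (1 − s). -/
/-!
Integrate out `p` first. The substitution `y = w - r - κ p` turns the inner integral into
`κ⁻¹` times the integral of `|y|^{-s}` over an interval of length `2κ`, weighted by at most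
`‖τ‖_∞`. Among such intervals the centred one `[-κ, κ]` carries the most mass, namely
`2κ^{1-s}/(1-s)`; this is subadditivity (resp. concavity) of `t ↦ t^{1-s}` when the interval
misses (resp. contains) the origin. Hence the inner integral is at most `2‖τ‖_∞κ^{-s}/(1-s)`
uniformly in `r`, and integrating against the probability density `ν` costs nothing. The factor
`2K‖ν‖_∞ ≥ 1` is free, since `ν` has mass one on an interval of length `2K`.
-/

open MeasureTheory Set

lemma rpow_add_sub_rpow_sub_le {p a b : ℝ} (hp0 : 0 ≤ p) (hp1 : p ≤ 1) (hb : 0 ≤ b) (hba : b ≤ a) :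
    (a + b) ^ p - (a - b) ^ p ≤ 2 * b ^ p := by
  have hsub : (a + b) ^ p ≤ (a - b) ^ p + (2 * b) ^ p := by
    have h := Real.rpow_add_le_add_rpow (sub_nonneg.2 hba) (by positivity : 0 ≤ 2 * b) hp0 hp1
    rwa [show a - b + 2 * b = a + b by ring] at h
  have htwo : (2 : ℝ) ^ p ≤ 2 := by
    simpa using Real.rpow_le_rpow_of_exponent_le one_le_two hp1
  rw [Real.mul_rpow zero_le_two hb] at hsub
  nlinarith [Real.rpow_nonneg hb p]

lemma rpow_add_add_rpow_sub_le {p a b : ℝ} (hp0 : 0 ≤ p) (hp1 : p ≤ 1) (ha : 0 ≤ a) (hab : a ≤ b) :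
    (a + b) ^ p + (b - a) ^ p ≤ 2 * b ^ p := by
  have h := (Real.concaveOn_rpow hp0 hp1).2 (mem_Ici.2 (by linarith : 0 ≤ a + b))
    (mem_Ici.2 (sub_nonneg.2 hab)) one_half_pos.le one_half_pos.le (add_halves 1)
  rw [smul_eq_mul, smul_eq_mul, smul_eq_mul, smul_eq_mul,
    show 1 / 2 * (a + b) + 1 / 2 * (b - a) = b by ring] at h
  linarith

section AbsRpow

variable {s : ℝ}

lemma intervalIntegrable_abs_rpow_neg (hs : s < 1) (a b : ℝ) :
    IntervalIntegrable (fun y : ℝ => |y| ^ (-s)) volume a b := by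
  have hloc : LocallyIntegrable (fun y : ℝ => |y| ^ (-s)) volume :=
    locallyIntegrable_of_norm_le_rpow (C := 1) (α := s) (by simp) (by simpa using hs)
      (ae_of_all _ fun y => by simp [abs_of_nonneg (Real.rpow_nonneg (abs_nonneg y) _)])
      (continuous_abs.measurable.pow_const _).aestronglyMeasurable
  exact (hloc.integrableOn_isCompact isCompact_uIcc).intervalIntegrable

lemma integral_abs_rpow_neg_of_nonneg (hs : s < 1) {b : ℝ} (hb : 0 ≤ b) :
    ∫ y in (0 : ℝ)..b, |y| ^ (-s) = b ^ (1 - s) / (1 - s) := by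
  have habs : EqOn (fun y : ℝ => |y| ^ (-s)) (fun y => y ^ (-s)) (uIcc 0 b) := fun y hy => by
    rw [uIcc_of_le hb] at hy
    simp only [abs_of_nonneg hy.1]
  rw [intervalIntegral.integral_congr habs, integral_rpow (Or.inl (by linarith)),
    Real.zero_rpow (by linarith), neg_add_eq_sub, sub_zero]

lemma integral_abs_rpow_neg_of_nonpos (hs : s < 1) {b : ℝ} (hb : b ≤ 0) :
    ∫ y in (0 : ℝ)..b, |y| ^ (-s) = -((-b) ^ (1 - s) / (1 - s)) := by
  have h := intervalIntegral.integral_comp_neg (a := 0) (b := -b) (fun y : ℝ => |y| ^ (-s))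
  simp only [abs_neg, neg_neg, neg_zero] at h
  rw [intervalIntegral.integral_symm, ← h, integral_abs_rpow_neg_of_nonneg hs (by linarith)]

lemma integral_abs_rpow_neg_le (hs0 : 0 ≤ s) (hs1 : s < 1) {κ : ℝ} (hκ : 0 ≤ κ) (c : ℝ) :
    ∫ y in c - κ..c + κ, |y| ^ (-s) ≤ 2 * κ ^ (1 - s) / (1 - s) := by
  wlog hc : 0 ≤ c generalizing c
  · have h := intervalIntegral.integral_comp_neg (a := c - κ) (b := c + κ) (fun y : ℝ => |y| ^ (-s))
    rw [show -(c + κ) = -c - κ by ring, show -(c - κ) = -c + κ by ring] at h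
    simpa only [abs_neg, ← h] using this (-c) (by linarith)
  have hp : 0 < 1 - s := by linarith
  rw [← intervalIntegral.integral_interval_sub_left (intervalIntegrable_abs_rpow_neg hs1 0 _)
    (intervalIntegrable_abs_rpow_neg hs1 0 _), integral_abs_rpow_neg_of_nonneg hs1 (by linarith)]
  rcases le_total κ c with hκc | hcκ
  · rw [integral_abs_rpow_neg_of_nonneg hs1 (by linarith), ← sub_div]
    gcongr
    exact rpow_add_sub_rpow_sub_le hp.le (by linarith) hκ hκc
  · rw [integral_abs_rpow_neg_of_nonpos hs1 (by linarith), sub_neg_eq_add, ← add_div, neg_sub]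
    gcongr
    exact rpow_add_add_rpow_sub_le hp.le (by linarith) hc hcκ

end AbsRpow

lemma integral_mul_le_mul_setIntegral {α : Type*} [MeasurableSpace α] {μ : Measure α}
    {S : Set α} {f g : α → ℝ} {C : ℝ} (hS : MeasurableSet S) (hg0 : ∀ x ∈ S, 0 ≤ g x)
    (hg : IntegrableOn g S μ) (hf0 : ∀ x, 0 ≤ f x) (hfS : ∀ x ∉ S, f x = 0)
    (hfC : ∀ᵐ x ∂μ, f x ≤ C) :
    ∫ x, g x * f x ∂μ ≤ C * ∫ x in S, g x ∂μ := by
  rw [← setIntegral_eq_integral_of_forall_compl_eq_zero fun x hx => by rw [hfS x hx, mul_zero],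
    ← integral_const_mul]
  refine integral_mono_of_nonneg ?_ (hg.const_mul C) ?_
  · filter_upwards [ae_restrict_mem hS] with x hx using mul_nonneg (hg0 x hx) (hf0 x)
  · filter_upwards [ae_restrict_mem hS, ae_restrict_of_ae hfC] with x hx hxC
    rw [mul_comm C]
    exact mul_le_mul_of_nonneg_left hxC (hg0 x hx)

lemma integral_le_mul_measureReal {α : Type*} [MeasurableSpace α] {μ : Measure α}
    {S : Set α} {f : α → ℝ} {C : ℝ} (hS : MeasurableSet S) (hSfin : μ S ≠ ⊤)
    (hf0 : ∀ x, 0 ≤ f x) (hfS : ∀ x ∉ S, f x = 0) (hfC : ∀ᵐ x ∂μ, f x ≤ C) :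
    ∫ x, f x ∂μ ≤ C * μ.real S := by
  simpa using integral_mul_le_mul_setIntegral (g := fun _ => 1) hS (fun _ _ => zero_le_one)
    (integrableOn_const hSfin) hf0 hfS hfC

lemma integral_abs_sub_mul_rpow_neg_mul_le {s κ C : ℝ} (hs0 : 0 ≤ s) (hs1 : s < 1) (hκ : 0 < κ)
    {f : ℝ → ℝ} (hf0 : ∀ p, 0 ≤ f p) (hfS : ∀ p ∉ Icc (-1 : ℝ) 1, f p = 0)
    (hfC : ∀ᵐ p, f p ≤ C) (a : ℝ) :
    ∫ p, |a - κ * p| ^ (-s) * f p ≤ C * (2 * κ ^ (-s) / (1 - s)) := by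
  have hC : 0 ≤ C := let ⟨p, hp⟩ := hfC.exists; (hf0 p).trans hp
  have hker : IntervalIntegrable (fun p => |a - κ * p| ^ (-s)) volume (-1) 1 := by
    simpa [hκ.ne'] using
      (((intervalIntegrable_abs_rpow_neg hs1 (a - κ) (a + κ)).comp_sub_left a).comp_mul_left
        (c := κ)).symm
  have hsubst : ∫ p in (-1 : ℝ)..1, |a - κ * p| ^ (-s) =
      κ⁻¹ * ∫ y in a - κ..a + κ, |y| ^ (-s) := by
    simpa [sub_eq_add_neg] using
      intervalIntegral.integral_comp_sub_mul (fun y : ℝ => |y| ^ (-s)) hκ.ne' a (a := -1) (b := 1)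
  calc ∫ p, |a - κ * p| ^ (-s) * f p ≤ C * ∫ p in Icc (-1 : ℝ) 1, |a - κ * p| ^ (-s) :=
        integral_mul_le_mul_setIntegral measurableSet_Icc (fun _ _ => by positivity)
          ((intervalIntegrable_iff_integrableOn_Icc_of_le (by norm_num)).1 hker) hf0 hfS hfC
    _ = C * (κ⁻¹ * ∫ y in a - κ..a + κ, |y| ^ (-s)) := by
        rw [integral_Icc_eq_integral_Ioc, ← intervalIntegral.integral_of_le (by norm_num), hsubst]
    _ ≤ C * (κ⁻¹ * (2 * κ ^ (1 - s) / (1 - s))) := by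
        gcongr
        exact integral_abs_rpow_neg_le hs0 hs1 hκ.le a
    _ = C * (2 * κ ^ (-s) / (1 - s)) := by
        rw [sub_eq_add_neg, Real.rpow_add hκ, Real.rpow_one]
        field_simp

theorem large_coupling_estimate_general (K : ℝ) (hK : 0 < K) (s : ℝ) (hs0 : 0 < s) (hs1 : s < 1)
    (κ : ℝ) (hκ : 0 < κ) (ν : ℝ → ℝ)
    (hνnonneg : ∀ q, 0 ≤ ν q)
    (hνsupp : ∀ q, q ∉ Set.Icc (-K) K → ν q = 0)
    (hνprob : ∫ q : ℝ, ν q = 1)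
    (Cν : ℝ) (hνbd : ∀ᵐ q : ℝ, ν q ≤ Cν)
    (τ : ℝ → ℝ) (hτnonneg : ∀ p, 0 ≤ τ p)
    (hτsupp : ∀ p, p ∉ Set.Icc (-1 : ℝ) 1 → τ p = 0)
    (Cτ : ℝ) (hτbd : ∀ᵐ p : ℝ, τ p ≤ Cτ) :
    ∀ w : ℝ, (∫ r : ℝ, ∫ p : ℝ, |w - r - κ * p| ^ (-s) * ν r * τ p) ≤
      4 * K * Cν * Cτ * κ ^ (-s) / (1 - s) := by
  intro w
  set B := Cτ * (2 * κ ^ (-s) / (1 - s))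
  have hCτ : 0 ≤ Cτ := let ⟨p, hp⟩ := hτbd.exists; (hτnonneg p).trans hp
  have hB : 0 ≤ B := by
    have := sub_pos.2 hs1
    positivity
  have hν : Integrable ν := .of_integral_ne_zero (by rw [hνprob]; exact one_ne_zero)
  have hmass : 1 ≤ Cν * (2 * K) := by
    have h := integral_le_mul_measureReal measurableSet_Icc measure_Icc_lt_top.ne hνnonneg hνsupp
      hνbd
    rwa [hνprob, Real.volume_real_Icc_of_le (by linarith), sub_neg_eq_add, ← two_mul] at h
  have hinner : ∀ r, ∫ p, |w - r - κ * p| ^ (-s) * ν r * τ p ≤ B * ν r := fun r => by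
    simp_rw [mul_right_comm _ (ν r)]
    rw [integral_mul_const]
    exact mul_le_mul_of_nonneg_right
      (integral_abs_sub_mul_rpow_neg_mul_le hs0.le hs1 hκ hτnonneg hτsupp hτbd (w - r)) (hνnonneg r)
  calc ∫ r, ∫ p, |w - r - κ * p| ^ (-s) * ν r * τ p ≤ ∫ r, B * ν r :=
        integral_mono_of_nonneg (ae_of_all _ fun r => integral_nonneg fun p => by
          have := hνnonneg r; have := hτnonneg p; positivity) (hν.const_mul B) (ae_of_all _ hinner)
    _ = B := by rw [integral_const_mul, hνprob, mul_one]
    _ ≤ Cν * (2 * K) * B := le_mul_of_one_le_left hB hmass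
    _ = 4 * K * Cν * Cτ * κ ^ (-s) / (1 - s) := by ring

/-- The large-coupling estimate (Lemma 6.1 of the paper): for bounded probability densities
`ν` (supported in `[−K,K]`) and `τ` (supported in `[−1,1]`), for every real `w`,
`∫∫ |w − r − κp|^{−s} ν(r) τ(p) dr dp ≤ 4 K ‖ν‖_∞ ‖τ‖_∞ κ^{−s}/(1−s)`. -/
theorem large_coupling_estimate (K : ℝ) (hK : 0 < K) (s : ℝ) (hs0 : 0 < s) (hs1 : s < 1)
    (κ : ℝ) (hκ : 0 < κ) (ν : ℝ → ℝ)
    (hνmeas : Measurable ν) (hνnonneg : ∀ q, 0 ≤ ν q)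
    (hνsupp : ∀ q, q ∉ Set.Icc (-K) K → ν q = 0)
    (hνprob : ∫ q : ℝ, ν q = 1)
    (Cν : ℝ) (hνbd : ∀ᵐ q : ℝ, ν q ≤ Cν)
    (τ : ℝ → ℝ) (hτmeas : Measurable τ) (hτnonneg : ∀ p, 0 ≤ τ p)
    (hτsupp : ∀ p, p ∉ Set.Icc (-1 : ℝ) 1 → τ p = 0)
    (hτprob : ∫ p : ℝ, τ p = 1)
    (Cτ : ℝ) (hτbd : ∀ᵐ p : ℝ, τ p ≤ Cτ) :
    ∀ w : ℝ, (∫ r : ℝ, ∫ p : ℝ, |w - r - κ * p| ^ (-s) * ν r * τ p) ≤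
      4 * K * Cν * Cτ * κ ^ (-s) / (1 - s) :=
  large_coupling_estimate_general K hK s hs0 hs1 κ hκ ν hνnonneg hνsupp hνprob Cν hνbd τ hτnonneg
    hτsupp Cτ hτbd
end

section
/- Let ν : ℝ → [0, ∞) be a bounded measurable probability density vanishing outside [−K, K] for some K ∈ (0, ∞), and let σ be a Borel probability measure on ℝ² supported in [−1, 1]² whose two marginal measures σ₀ and σ₁ (the distributions of the first and second coordinates) have bounded densities. Then for every s ∈ (0, 1) there exists κ₁ < ∞, depending only on K, ‖ν‖_∞, the sup-norms of the marginal densities, and s, such that for all κ ≥ κ₁: sup over E ∈ ℝ and over w ∈ ℂ with Im w ≥ 0 of (T_{κ,E,s} 1)(w) < 1. -/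
open MeasureTheory Complex

/-- `φ⁺_{z,q}(w) = ½(−1/(w+(z−q₀)/√2) + (−1/(w+(z−q₁)/√2)))`; terms with vanishing
denominator are zero (automatic, since division by zero is zero). -/
noncomputable def phiPlus (z : ℂ) (q : ℝ × ℝ) (w : ℂ) : ℂ :=
  (1 / 2) * (-1 / (w + (z - (q.1 : ℂ)) / (Real.sqrt 2 : ℂ))
    + -1 / (w + (z - (q.2 : ℂ)) / (Real.sqrt 2 : ℂ)))

/-- `φ⁻_{z,q}(w) = ½(−1/(w+(z−q₀)/√2) − (−1/(w+(z−q₁)/√2)))`. -/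
noncomputable def phiMinus (z : ℂ) (q : ℝ × ℝ) (w : ℂ) : ℂ :=
  (1 / 2) * (-1 / (w + (z - (q.1 : ℂ)) / (Real.sqrt 2 : ℂ))
    - -1 / (w + (z - (q.2 : ℂ)) / (Real.sqrt 2 : ℂ)))

/-- The transfer operator `T_{κ,z,s}` acting on real-valued bounded Borel functions on the
closed upper half-plane. -/
noncomputable def transferOpR (ν : ℝ → ℝ) (σ : Measure (ℝ × ℝ)) (κ : ℝ) (z : ℂ) (s : ℝ)
    (f : ℂ → ℝ) (w : ℂ) : ℝ :=
  ∫ p : ℝ × ℝ, (∫ r : ℝ, f (phiPlus z (r + κ * p.1, r + κ * p.2) w) *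
    (((‖phiPlus z (r + κ * p.1, r + κ * p.2) w‖) ^ s
      + (‖phiMinus z (r + κ * p.1, r + κ * p.2) w‖) ^ s) * ν r)) ∂σ

/-!
Put `t := √2 Re w + E`. Since `|Re (w + (E - q)/√2)| = |t - q|/√2`, both `|φ^±_{E,q}(w)|^s` are
bounded by `2 (|t - q₀|^{-s} + |t - q₁|^{-s})`, whatever `Im w` is. Integrating out `r` against
`ν`, it remains to make `∫ |t - κ x|^{-s} dσᵢ(x)` small uniformly in `t`. On `{|t - κ x| ≤ h}` the
density bound `Cᵢ` and the local integrability of `|y|^{-s}` (here `s < 1` is used) give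
`O(Cᵢ h^{1-s} / κ)`; elsewhere the integrand is at most `h^{-s}`. Taking first `h` and then `κ`
large makes each marginal average at most `1/16`, hence `T 1 ≤ 1/2`.
-/

open Set Filter Topology
open scoped ENNReal

lemma lintegral_comp_sub_mul {g : ℝ → ℝ≥0∞} (hg : Measurable g) (t : ℝ) {κ : ℝ} (hκ : κ ≠ 0) :
    ∫⁻ x, g (t - κ * x) = ENNReal.ofReal |κ⁻¹| * ∫⁻ y, g y := by
  have hmap : Measure.map (fun x : ℝ => t - κ * x) volume = ENNReal.ofReal |κ⁻¹| • volume := by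
    have hcomp : (fun x : ℝ => t - κ * x) = (t + ·) ∘ (-κ * ·) := by
      funext x; simp only [Function.comp_apply]; ring
    rw [hcomp, ← Measure.map_map (measurable_const_add t) (measurable_const_mul (-κ)),
      Real.map_volume_mul_left (neg_ne_zero.2 hκ), Measure.map_smul, map_add_left_eq_self,
      inv_neg, abs_neg]
  rw [← lintegral_map hg (by fun_prop), hmap, lintegral_smul_measure, smul_eq_mul]

lemma withDensity_ofReal_le_smul {α : Type*} [MeasurableSpace α] {μ : Measure α} {f : α → ℝ}
    {C : ℝ} (hf : ∀ᵐ x ∂μ, f x ≤ C) :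
    μ.withDensity (fun x => ENNReal.ofReal (f x)) ≤ ENNReal.ofReal C • μ :=
  (withDensity_mono (hf.mono fun _ hx => ENNReal.ofReal_le_ofReal hx)).trans_eq
    (withDensity_const _)

lemma tendsto_enorm_inv_rpow_atTop {s : ℝ} (hs : 0 < s) :
    Tendsto (fun h : ℝ => ‖h‖ₑ⁻¹ ^ s) atTop (𝓝 0) := by
  have h_enorm : Tendsto (fun h : ℝ => ‖h‖ₑ) atTop (𝓝 ∞) :=
    ENNReal.tendsto_ofReal_atTop.congr'
      ((eventually_ge_atTop 0).mono fun h hh => (Real.enorm_eq_ofReal hh).symm)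
  have h_inv : Tendsto (fun h : ℝ => ‖h‖ₑ⁻¹) atTop (𝓝 0) := by
    simpa using tendsto_inv_iff.2 h_enorm
  have := ((ENNReal.continuous_rpow_const (y := s)).tendsto 0).comp h_inv
  rwa [ENNReal.zero_rpow_of_pos hs] at this

lemma ENNReal.rpow_le_two_mul_rpow_add_rpow {x a b : ℝ≥0∞} {s : ℝ} (hs0 : 0 ≤ s) (hs1 : s ≤ 1)
    (h : x ≤ 2 * (a + b)) : x ^ s ≤ 2 * (a ^ s + b ^ s) :=
  calc x ^ s ≤ (2 * (a + b)) ^ s := ENNReal.rpow_le_rpow h hs0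
    _ = 2 ^ s * (a + b) ^ s := ENNReal.mul_rpow_of_nonneg _ _ hs0
    _ ≤ 2 ^ (1 : ℝ) * (a ^ s + b ^ s) := by
        gcongr
        · exact one_le_two
        · exact ENNReal.rpow_add_le_add_rpow _ _ hs0 hs1
    _ = 2 * (a ^ s + b ^ s) := by rw [ENNReal.rpow_one]

-- `|y|^{-s}`, with value `∞` at `y = 0` so that pointwise bounds by it need no exceptional set.
noncomputable def invAbsRpow (s y : ℝ) : ℝ≥0∞ := ‖y‖ₑ⁻¹ ^ s

lemma measurable_invAbsRpow (s : ℝ) : Measurable (invAbsRpow s) :=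
  measurable_enorm.inv.pow_const s

section invAbsRpow

variable {s : ℝ}

lemma invAbsRpow_le_indicator_add (hs : 0 ≤ s) {h : ℝ} (hh : 0 ≤ h) (y : ℝ) :
    invAbsRpow s y ≤ (Icc (-h) h).indicator (invAbsRpow s) y + ‖h‖ₑ⁻¹ ^ s := by
  by_cases hy : y ∈ Icc (-h) h
  · rw [indicator_of_mem hy]
    exact le_self_add
  · rw [indicator_of_notMem hy, zero_add]
    have hhy : ‖h‖ₑ ≤ ‖y‖ₑ := by
      rw [enorm_le_iff_norm_le, Real.norm_of_nonneg hh, Real.norm_eq_abs]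
      exact (not_le.1 fun hyh => hy (abs_le.1 hyh)).le
    exact ENNReal.rpow_le_rpow (ENNReal.inv_le_inv.2 hhy) hs

lemma setLIntegral_invAbsRpow_Icc_lt_top (hs0 : 0 ≤ s) (hs1 : s < 1) (h : ℝ) :
    ∫⁻ y in Icc (-h) h, invAbsRpow s y < ∞ := by
  have hloc : LocallyIntegrable (fun y : ℝ => |y| ^ (-s)) :=
    locallyIntegrable_of_norm_le_rpow (μ := volume) (C := 1) (by simp) (by simpa using hs1)
      (Eventually.of_forall fun y => by simp [abs_nonneg, Real.abs_rpow_of_nonneg])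
      (continuous_abs.measurable.pow_const (-s)).aestronglyMeasurable
  have hae : ∀ᵐ y : ℝ, invAbsRpow s y = ‖|y| ^ (-s)‖ₑ := by
    filter_upwards [volume.ae_ne 0] with y hy
    rw [invAbsRpow, Real.rpow_neg (abs_nonneg y), ← Real.inv_rpow (abs_nonneg y),
      Real.enorm_rpow_of_nonneg (inv_nonneg.2 (abs_nonneg y)) hs0, enorm_inv (abs_ne_zero.2 hy),
      Real.enorm_abs]
  rw [setLIntegral_congr_fun_ae measurableSet_Icc (hae.mono fun y hy _ => hy)]
  exact (hloc.integrableOn_isCompact isCompact_Icc).2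

lemma lintegral_invAbsRpow_sub_mul_le {μ : Measure ℝ} [IsProbabilityMeasure μ] {c : ℝ≥0∞}
    (hμ : μ ≤ c • volume) (hs : 0 ≤ s) {h : ℝ} (hh : 0 ≤ h) {κ : ℝ} (hκ : κ ≠ 0) (t : ℝ) :
    ∫⁻ x, invAbsRpow s (t - κ * x) ∂μ
      ≤ c * (ENNReal.ofReal |κ⁻¹| * ∫⁻ y in Icc (-h) h, invAbsRpow s y) + ‖h‖ₑ⁻¹ ^ s := by
  have hind : Measurable ((Icc (-h) h).indicator (invAbsRpow s)) :=
    (measurable_invAbsRpow s).indicator measurableSet_Icc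
  calc ∫⁻ x, invAbsRpow s (t - κ * x) ∂μ
      ≤ ∫⁻ x, ((Icc (-h) h).indicator (invAbsRpow s) (t - κ * x) + ‖h‖ₑ⁻¹ ^ s) ∂μ :=
        lintegral_mono fun x => invAbsRpow_le_indicator_add hs hh _
    _ = ∫⁻ x, (Icc (-h) h).indicator (invAbsRpow s) (t - κ * x) ∂μ + ‖h‖ₑ⁻¹ ^ s := by
        rw [lintegral_add_right _ measurable_const, lintegral_const, measure_univ, mul_one]
    _ ≤ c * (∫⁻ x, (Icc (-h) h).indicator (invAbsRpow s) (t - κ * x)) + ‖h‖ₑ⁻¹ ^ s := by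
        gcongr
        exact (lintegral_mono' hμ le_rfl).trans_eq (by rw [lintegral_smul_measure, smul_eq_mul])
    _ = c * (ENNReal.ofReal |κ⁻¹| * ∫⁻ y in Icc (-h) h, invAbsRpow s y) + ‖h‖ₑ⁻¹ ^ s := by
        rw [lintegral_comp_sub_mul hind t hκ, lintegral_indicator measurableSet_Icc]

lemma exists_forall_lintegral_invAbsRpow_sub_mul_le (hs0 : 0 < s) (hs1 : s < 1)
    (μ : Measure ℝ) [IsProbabilityMeasure μ] {c : ℝ≥0∞} (hc : c ≠ ∞) (hμ : μ ≤ c • volume)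
    {ε : ℝ≥0∞} (hε : ε ≠ 0) :
    ∃ κ₁ : ℝ, ∀ κ, κ₁ ≤ κ → ∀ t, ∫⁻ x, invAbsRpow s (t - κ * x) ∂μ ≤ ε := by
  have hε2 : 0 < ε / 2 := ENNReal.half_pos hε
  obtain ⟨h, hh_tail, hh⟩ := (((tendsto_enorm_inv_rpow_atTop hs0).eventually
    (eventually_le_nhds hε2)).and (eventually_ge_atTop 0)).exists
  have h_core : Tendsto
      (fun κ : ℝ => c * (ENNReal.ofReal |κ⁻¹| * ∫⁻ y in Icc (-h) h, invAbsRpow s y))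
      atTop (𝓝 0) := by
    have h_inv : Tendsto (fun κ : ℝ => ENNReal.ofReal |κ⁻¹|) atTop (𝓝 0) := by
      simpa using ENNReal.tendsto_ofReal tendsto_inv_atTop_zero.abs
    simpa using ENNReal.Tendsto.const_mul (ENNReal.Tendsto.mul_const h_inv
      (Or.inr (setLIntegral_invAbsRpow_Icc_lt_top hs0.le hs1 h).ne)) (Or.inr hc)
  obtain ⟨κ₁, hκ₁⟩ := eventually_atTop.1
    ((h_core.eventually (eventually_le_nhds hε2)).and (eventually_gt_atTop 0))
  refine ⟨κ₁, fun κ hκ t => ?_⟩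
  calc ∫⁻ x, invAbsRpow s (t - κ * x) ∂μ
      ≤ c * (ENNReal.ofReal |κ⁻¹| * ∫⁻ y in Icc (-h) h, invAbsRpow s y) + ‖h‖ₑ⁻¹ ^ s :=
        lintegral_invAbsRpow_sub_mul_le hμ hs0.le hh (hκ₁ κ hκ).2.ne' t
    _ ≤ ε / 2 + ε / 2 := add_le_add (hκ₁ κ hκ).1 hh_tail
    _ = ε := ENNReal.add_halves ε

lemma exists_forall_lintegral_invAbsRpow_sub_mul_le_of_map_eq {X : Type*} [MeasurableSpace X]
    (σ : Measure X) [IsProbabilityMeasure σ] {π : X → ℝ} (hπ : Measurable π) {ρ : ℝ → ℝ}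
    (hmarg : σ.map π = volume.withDensity (fun x => ENNReal.ofReal (ρ x)))
    {C : ℝ} (hρ : ∀ᵐ x, ρ x ≤ C) (hs0 : 0 < s) (hs1 : s < 1) {ε : ℝ≥0∞} (hε : ε ≠ 0) :
    ∃ κ₁ : ℝ, ∀ κ, κ₁ ≤ κ → ∀ t, ∫⁻ p, invAbsRpow s (t - κ * π p) ∂σ ≤ ε := by
  have := Measure.isProbabilityMeasure_map (μ := σ) hπ.aemeasurable
  obtain ⟨κ₁, hκ₁⟩ := exists_forall_lintegral_invAbsRpow_sub_mul_le hs0 hs1 (σ.map π)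
    ENNReal.ofReal_ne_top (hmarg ▸ withDensity_ofReal_le_smul hρ) hε
  refine ⟨κ₁, fun κ hκ t => ?_⟩
  rw [← lintegral_map (f := fun x => invAbsRpow s (t - κ * x))
    ((measurable_invAbsRpow s).comp (by fun_prop)) hπ]
  exact hκ₁ κ hκ t

end invAbsRpow

lemma enorm_neg_one_div_le (w : ℂ) (x : ℝ) :
    ‖-1 / (w + x / (Real.sqrt 2 : ℂ))‖ₑ ≤ 2 * ‖Real.sqrt 2 * w.re + x‖ₑ⁻¹ := by
  set d := w + x / (Real.sqrt 2 : ℂ)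
  rcases eq_or_ne d 0 with hd | hd
  · simp [hd]
  have hsqrt : 0 < Real.sqrt 2 := by positivity
  have hre : |Real.sqrt 2 * w.re + x| ≤ 2 * ‖d‖ :=
    calc |Real.sqrt 2 * w.re + x| = Real.sqrt 2 * |d.re| := by
          have : d.re = w.re + x / Real.sqrt 2 := by simp [d, div_ofReal_re]
          rw [this, ← abs_of_pos hsqrt, ← abs_mul, abs_of_pos hsqrt, mul_add,
            mul_div_cancel₀ _ hsqrt.ne']
      _ ≤ 2 * ‖d‖ := by
          gcongr
          · exact Real.sqrt_le_iff.2 ⟨by norm_num, by norm_num⟩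
          · exact abs_re_le_norm d
  have hle : ‖Real.sqrt 2 * w.re + x‖ₑ / 2 ≤ ‖d‖ₑ := by
    refine ENNReal.div_le_of_le_mul' ?_
    rw [Real.enorm_eq_ofReal_abs, ← ofReal_norm, ← ENNReal.ofReal_ofNat 2,
      ← ENNReal.ofReal_mul zero_le_two]
    exact ENNReal.ofReal_le_ofReal hre
  rw [neg_div, enorm_neg, one_div, enorm_inv hd, ← div_eq_mul_inv]
  exact (ENNReal.inv_le_inv.2 hle).trans_eq
    (ENNReal.inv_div (Or.inl ENNReal.ofNat_ne_top) (Or.inl two_ne_zero))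

lemma enorm_half_mul_le (u : ℂ) : ‖(1 / 2 : ℂ) * u‖ₑ ≤ ‖u‖ₑ := by
  rw [enorm_mul]
  exact mul_le_of_le_one_left zero_le (by simp [← ofReal_norm])

lemma enorm_phiPlus_le (E : ℝ) (q : ℝ × ℝ) (w : ℂ) :
    ‖phiPlus E q w‖ₑ
      ≤ 2 * (‖Real.sqrt 2 * w.re + (E - q.1)‖ₑ⁻¹ + ‖Real.sqrt 2 * w.re + (E - q.2)‖ₑ⁻¹) := by
  have h₁ := enorm_neg_one_div_le w (E - q.1)
  have h₂ := enorm_neg_one_div_le w (E - q.2)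
  push_cast at h₁ h₂
  rw [mul_add]
  exact (enorm_half_mul_le _).trans ((enorm_add_le _ _).trans (add_le_add h₁ h₂))

lemma enorm_phiMinus_le (E : ℝ) (q : ℝ × ℝ) (w : ℂ) :
    ‖phiMinus E q w‖ₑ
      ≤ 2 * (‖Real.sqrt 2 * w.re + (E - q.1)‖ₑ⁻¹ + ‖Real.sqrt 2 * w.re + (E - q.2)‖ₑ⁻¹) := by
  have h₁ := enorm_neg_one_div_le w (E - q.1)
  have h₂ := enorm_neg_one_div_le w (E - q.2)
  push_cast at h₁ h₂
  rw [mul_add]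
  exact (enorm_half_mul_le _).trans (enorm_sub_le.trans (add_le_add h₁ h₂))

lemma enorm_phiPlus_rpow_add_enorm_phiMinus_rpow_le {s : ℝ} (hs0 : 0 ≤ s) (hs1 : s ≤ 1)
    (E : ℝ) (q : ℝ × ℝ) (w : ℂ) :
    ‖phiPlus E q w‖ₑ ^ s + ‖phiMinus E q w‖ₑ ^ s
      ≤ 4 * (invAbsRpow s (Real.sqrt 2 * w.re + E - q.1)
        + invAbsRpow s (Real.sqrt 2 * w.re + E - q.2)) := by
  grw [ENNReal.rpow_le_two_mul_rpow_add_rpow hs0 hs1 (enorm_phiPlus_le E q w),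
    ENNReal.rpow_le_two_mul_rpow_add_rpow hs0 hs1 (enorm_phiMinus_le E q w)]
  simp only [invAbsRpow, add_sub_assoc]
  exact le_of_eq (by ring)

lemma enorm_transferOpR_one_le {ν : ℝ → ℝ} (hν : ∀ r, 0 ≤ ν r) (hνprob : ∫ r, ν r = 1)
    (σ : Measure (ℝ × ℝ)) [SFinite σ] {κ s : ℝ} (hs0 : 0 ≤ s) (hs1 : s ≤ 1) {ε : ℝ≥0∞}
    (h₀ : ∀ t, ∫⁻ p, invAbsRpow s (t - κ * p.1) ∂σ ≤ ε)
    (h₁ : ∀ t, ∫⁻ p, invAbsRpow s (t - κ * p.2) ∂σ ≤ ε) (E : ℝ) (w : ℂ) :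
    ‖transferOpR ν σ κ E s (fun _ => 1) w‖ₑ ≤ 8 * ε := by
  set τ := Real.sqrt 2 * w.re + E
  set G : ℝ × ℝ → ℝ → ℝ≥0∞ := fun p r =>
    4 * (invAbsRpow s (τ - r - κ * p.1) + invAbsRpow s (τ - r - κ * p.2)) * ‖ν r‖ₑ
  have hν_int : Integrable ν := .of_integral_ne_zero (by simp [hνprob])
  have hν_mass : ∫⁻ r, ‖ν r‖ₑ = 1 := by
    rw [← ofReal_integral_norm_eq_lintegral_enorm hν_int]
    simp [Real.norm_of_nonneg (hν _), hνprob]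
  have hG_meas : AEMeasurable (Function.uncurry G) (σ.prod volume) := by
    have hι : Measurable fun z : (ℝ × ℝ) × ℝ =>
        4 * (invAbsRpow s (τ - z.2 - κ * z.1.1) + invAbsRpow s (τ - z.2 - κ * z.1.2)) := by
      have := measurable_invAbsRpow s
      fun_prop
    exact hι.aemeasurable.mul hν_int.aemeasurable.enorm.comp_snd
  calc ‖transferOpR ν σ κ E s (fun _ => 1) w‖ₑ
      ≤ ∫⁻ p, ∫⁻ r, ‖(‖phiPlus E (r + κ * p.1, r + κ * p.2) w‖ ^ s
          + ‖phiMinus E (r + κ * p.1, r + κ * p.2) w‖ ^ s) * ν r‖ₑ ∂volume ∂σ := by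
        simp only [transferOpR, one_mul]
        exact (enorm_integral_le_lintegral_enorm _).trans
          (lintegral_mono fun p => enorm_integral_le_lintegral_enorm _)
    _ ≤ ∫⁻ p, ∫⁻ r, G p r ∂volume ∂σ := by
        refine lintegral_mono fun p => lintegral_mono fun r => ?_
        rw [enorm_mul]
        simp only [G]
        gcongr ?_ * _
        refine (enorm_add_le _ _).trans ?_
        rw [Real.enorm_rpow_of_nonneg (norm_nonneg _) hs0,
          Real.enorm_rpow_of_nonneg (norm_nonneg _) hs0, enorm_norm, enorm_norm]
        simpa only [sub_add_eq_sub_sub] using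
          enorm_phiPlus_rpow_add_enorm_phiMinus_rpow_le hs0 hs1 E (r + κ * p.1, r + κ * p.2) w
    _ = ∫⁻ r, ∫⁻ p, G p r ∂σ ∂volume := lintegral_lintegral_swap hG_meas
    _ ≤ ∫⁻ r, 4 * (ε + ε) * ‖ν r‖ₑ := by
        refine lintegral_mono fun r => ?_
        have hι : Measurable fun p : ℝ × ℝ => invAbsRpow s (τ - r - κ * p.1) :=
          (measurable_invAbsRpow s).comp (by fun_prop)
        simp only [G]
        rw [lintegral_mul_const' _ _ enorm_ne_top, lintegral_const_mul' _ _ ENNReal.ofNat_ne_top,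
          lintegral_add_left hι]
        gcongr
        exacts [h₀ _, h₁ _]
    _ = 8 * ε := by
        rw [lintegral_const_mul'' _ hν_int.aemeasurable.enorm, hν_mass]
        ring

theorem transferOp_large_coupling_general (ν : ℝ → ℝ)
    (hνnonneg : ∀ q, 0 ≤ ν q)
    (hνprob : ∫ q : ℝ, ν q = 1)
    (σ : Measure (ℝ × ℝ)) [IsProbabilityMeasure σ]
    (σ₀ σ₁ : ℝ → ℝ)
    (hmarg₀ : σ.map Prod.fst = volume.withDensity (fun x => ENNReal.ofReal (σ₀ x)))
    (hmarg₁ : σ.map Prod.snd = volume.withDensity (fun x => ENNReal.ofReal (σ₁ x)))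
    (C₀ C₁ : ℝ) (hσ₀bd : ∀ᵐ p : ℝ, σ₀ p ≤ C₀) (hσ₁bd : ∀ᵐ p : ℝ, σ₁ p ≤ C₁)
    (s : ℝ) (hs0 : 0 < s) (hs1 : s < 1) :
    ∃ κ₁ : ℝ, ∀ κ : ℝ, κ₁ ≤ κ → ∃ δ : ℝ, δ < 1 ∧ ∀ E : ℝ, ∀ w : ℂ, 0 ≤ w.im →
      transferOpR ν σ κ (E : ℂ) s (fun _ => 1) w ≤ δ := by
  obtain ⟨κ₀, h₀⟩ := exists_forall_lintegral_invAbsRpow_sub_mul_le_of_map_eq σ measurable_fst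
    hmarg₀ hσ₀bd hs0 hs1 (ε := 16⁻¹) (by norm_num)
  obtain ⟨κ₁, h₁⟩ := exists_forall_lintegral_invAbsRpow_sub_mul_le_of_map_eq σ measurable_snd
    hmarg₁ hσ₁bd hs0 hs1 (ε := 16⁻¹) (by norm_num)
  refine ⟨max κ₀ κ₁, fun κ hκ => ⟨1 / 2, by norm_num, fun E w _ => ?_⟩⟩
  have hT := enorm_transferOpR_one_le hνnonneg hνprob σ hs0.le hs1.le
    (h₀ κ (le_of_max_le_left hκ)) (h₁ κ (le_of_max_le_right hκ)) E w
  rw [← ofReal_norm, ENNReal.ofReal_le_iff_le_toReal (by finiteness)] at hT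
  calc transferOpR ν σ κ E s (fun _ => 1) w ≤ ‖transferOpR ν σ κ E s (fun _ => 1) w‖ :=
        Real.le_norm_self _
    _ ≤ 1 / 2 := hT.trans_eq (by norm_num [ENNReal.toReal_mul, ENNReal.toReal_inv])

/-- Lemma 6.1 / Theorem 1.6 ingredient (large coupling): if both marginals of `σ` have
bounded densities, then for every `s ∈ (0,1)` there is `κ₁ < ∞` such that for all
`κ ≥ κ₁`, `sup_{E ∈ ℝ, Im w ≥ 0} (T_{κ,E,s} 1)(w) < 1`. -/
theorem transferOp_large_coupling (K : ℝ) (hK : 0 < K) (ν : ℝ → ℝ)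
    (hνmeas : Measurable ν) (hνnonneg : ∀ q, 0 ≤ ν q)
    (hνsupp : ∀ q, q ∉ Set.Icc (-K) K → ν q = 0)
    (hνprob : ∫ q : ℝ, ν q = 1)
    (Cν : ℝ) (hνbd : ∀ᵐ q : ℝ, ν q ≤ Cν)
    (σ : Measure (ℝ × ℝ)) [IsProbabilityMeasure σ]
    (hσsupp : σ {p : ℝ × ℝ | ¬(|p.1| ≤ 1 ∧ |p.2| ≤ 1)} = 0)
    (σ₀ σ₁ : ℝ → ℝ) (hσ₀meas : Measurable σ₀) (hσ₁meas : Measurable σ₁)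
    (hσ₀nonneg : ∀ p, 0 ≤ σ₀ p) (hσ₁nonneg : ∀ p, 0 ≤ σ₁ p)
    (hmarg₀ : σ.map Prod.fst = volume.withDensity (fun x => ENNReal.ofReal (σ₀ x)))
    (hmarg₁ : σ.map Prod.snd = volume.withDensity (fun x => ENNReal.ofReal (σ₁ x)))
    (C₀ C₁ : ℝ) (hσ₀bd : ∀ᵐ p : ℝ, σ₀ p ≤ C₀) (hσ₁bd : ∀ᵐ p : ℝ, σ₁ p ≤ C₁)
    (s : ℝ) (hs0 : 0 < s) (hs1 : s < 1) :
    ∃ κ₁ : ℝ, ∀ κ : ℝ, κ₁ ≤ κ → ∃ δ : ℝ, δ < 1 ∧ ∀ E : ℝ, ∀ w : ℂ, 0 ≤ w.im →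
      transferOpR ν σ κ (E : ℂ) s (fun _ => 1) w ≤ δ :=
  transferOp_large_coupling_general ν hνnonneg hνprob σ σ₀ σ₁ hmarg₀ hmarg₁ C₀ C₁ hσ₀bd hσ₁bd s hs0
    hs1
end
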